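/- arXiv:math/0412347 — 3 statements merged into one kernel-verified Lean document; each statement's English description precedes it below -/
import Mathlib

section
/- Let a be a nonnegative symmetric bilinear form on a real vector space V, let Δt > 0, β ∈ [0, 1/2], and define R(u,v) = (1-2β)a(u,v) + |u-v|²/Δt² where |·| is a norm from an inner product on V. If a(w,w) ≤ κ|w|² for all w ∈ V and Δt² ≤ 4(1-α)/(κ(1-2β)) for some α ∈ (0,1), then R(u,v) ≥ ((1-2β)/4)a(u+v, u+v) + α|u-v|²/Δt² for all u, v ∈ V. -/
/-- Coercivity of `R(u,v) = (1-2β)a(u,v) + |u-v|²/Δt²` under the CFL-type condition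
`Δt² (1-2β) κ ≤ 4(1-α)`:
`R(u,v) ≥ ((1-2β)/4) a(u+v,u+v) + α |u-v|²/Δt²`. -/
theorem discrete_energy_coercivity
    {V : Type*} [NormedAddCommGroup V] [InnerProductSpace ℝ V]
    (a : V →ₗ[ℝ] V →ₗ[ℝ] ℝ) (hsymm : ∀ x y : V, a x y = a y x)
    (hnonneg : ∀ w : V, 0 ≤ a w w)
    (κ : ℝ) (hκ : 0 < κ) (hbound : ∀ w : V, a w w ≤ κ * ‖w‖ ^ 2)
    (β : ℝ) (hβ0 : 0 ≤ β) (hβ1 : β < 1 / 2)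
    (α : ℝ) (hα0 : 0 < α) (hα1 : α < 1)
    (Δt : ℝ) (hΔt : 0 < Δt) (hCFL : Δt ^ 2 * (1 - 2 * β) * κ ≤ 4 * (1 - α))
    (u v : V) :
    (1 - 2 * β) / 4 * a (u + v) (u + v) + α * (‖u - v‖ ^ 2 / Δt ^ 2) ≤
      (1 - 2 * β) * a u v + ‖u - v‖ ^ 2 / Δt ^ 2 := by
  have ht : (0 : ℝ) < Δt ^ 2 := by positivity
  have h1 : a (u + v) (u + v) = a u u + 2 * a u v + a v v := by
    simp [map_add, hsymm u v]; ring
  have h2 : a (u - v) (u - v) = a u u - 2 * a u v + a v v := by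
    simp [map_sub, hsymm u v]; ring
  have hb := hbound (u - v)
  have hβ : (0 : ℝ) ≤ 1 - 2 * β := by linarith
  have key : (1 - 2 * β) * Δt ^ 2 * a (u - v) (u - v) ≤ 4 * (1 - α) * ‖u - v‖ ^ 2 := by
    have h3 : (1 - 2 * β) * Δt ^ 2 * a (u - v) (u - v)
        ≤ (1 - 2 * β) * Δt ^ 2 * (κ * ‖u - v‖ ^ 2) :=
      mul_le_mul_of_nonneg_left hb (by positivity)
    have h4 : Δt ^ 2 * (1 - 2 * β) * κ * ‖u - v‖ ^ 2 ≤ 4 * (1 - α) * ‖u - v‖ ^ 2 :=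
      mul_le_mul_of_nonneg_right hCFL (sq_nonneg _)
    nlinarith [h3, h4]
  have final : (1 - 2 * β) / 4 * a (u - v) (u - v) ≤ (1 - α) * ‖u - v‖ ^ 2 / Δt ^ 2 := by
    rw [le_div_iff₀ ht]
    nlinarith [key]
  have expand : (1 - 2 * β) * a u v
      = (1 - 2 * β) / 4 * a (u + v) (u + v) - (1 - 2 * β) / 4 * a (u - v) (u - v) := by
    rw [h1, h2]; ring
  rw [expand]
  have : α * (‖u - v‖ ^ 2 / Δt ^ 2) + (1 - α) * ‖u - v‖ ^ 2 / Δt ^ 2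
      = ‖u - v‖ ^ 2 / Δt ^ 2 := by field_simp; ring
  linarith [final]
end

section
/- Let (a_n) be a sequence of nonnegative reals, Δt > 0, α > Δt, and suppose for all n ≥ 0: α·a_{n+1} ≤ b_{n+1} + Δt·Σ_{p=0}^{n+1} a_p, where (b_n) is nondecreasing and nonnegative. Then for all n, Σ_{p=0}^{n} a_p remains bounded in terms of the b's, namely a_0 Δt-free discrete Grönwall bound: Σ_{p=0}^n a_p ≤ a_0 exp(nΔt/(α-Δt)) + Σ_{p=1}^n (b_p/(α-Δt)) exp((n-p)Δt/(α-Δt)). -/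
open Finset

namespace GronwallPaper

/-- Discrete Grönwall lemma: if `(α - Δt) a_{n+1} ≤ b_{n+1} + Δt Σ_{p=0}^{n} a_p` with
`(a_n)` nonnegative and `(b_n)` nonnegative nondecreasing, `0 < Δt < α`, then
`Σ_{p=0}^n a_p ≤ a_0 exp(nΔt/(α-Δt)) + Σ_{p=1}^n (b_p/(α-Δt)) exp((n-p)Δt/(α-Δt))`. -/
theorem discrete_gronwall
    (a : ℕ → ℝ) (b : ℕ → ℝ) (Δt α : ℝ)
    (hΔt : 0 < Δt) (hα : Δt < α)
    (ha : ∀ n, 0 ≤ a n)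
    (hb : ∀ n, 1 ≤ n → 0 ≤ b n)
    (hbmono : ∀ m n, 1 ≤ m → m ≤ n → b m ≤ b n)
    (hrec : ∀ n : ℕ, (α - Δt) * a (n + 1) ≤ b (n + 1) + Δt * ∑ p ∈ range (n + 1), a p) :
    ∀ n : ℕ, ∑ p ∈ range (n + 1), a p ≤
      a 0 * Real.exp (n * Δt / (α - Δt)) +
        ∑ p ∈ Icc 1 n, (b p / (α - Δt)) * Real.exp ((n - p : ℝ) * Δt / (α - Δt)) := by
  have hd : 0 < α - Δt := sub_pos.mpr hα
  set K := Δt / (α - Δt) with hKdef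
  have hK0 : 0 < K := div_pos hΔt hd
  have hexp : 1 + K ≤ Real.exp K := by
    have h := Real.add_one_le_exp K; linarith
  have hE : ∀ x : ℝ, x * Δt / (α - Δt) = x * K := fun x => by
    rw [hKdef, mul_div_assoc]
  intro n
  induction n with
  | zero => simp
  | succ n ih =>
    simp only [hE] at ih ⊢
    have hS : 0 ≤ ∑ p ∈ range (n + 1), a p :=
      Finset.sum_nonneg fun p _ => ha p
    have ha1 : a (n + 1) ≤ b (n + 1) / (α - Δt) + K * ∑ p ∈ range (n + 1), a p := by
      rw [hKdef, div_mul_eq_mul_div, ← add_div, le_div_iff₀ hd, mul_comm]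
      exact hrec n
    rw [Finset.sum_range_succ, Finset.sum_Icc_succ_top (by omega : 1 ≤ n + 1)]
    push_cast
    have hA : (1 + K) * (a 0 * Real.exp ((n : ℝ) * K))
        ≤ a 0 * Real.exp (((n : ℝ) + 1) * K) := by
      have h1 : (1 + K) * Real.exp ((n : ℝ) * K) ≤ Real.exp (((n : ℝ) + 1) * K) := by
        calc (1 + K) * Real.exp ((n : ℝ) * K)
            ≤ Real.exp K * Real.exp ((n : ℝ) * K) :=
              mul_le_mul_of_nonneg_right hexp (Real.exp_pos _).le
          _ = Real.exp (K + (n : ℝ) * K) := (Real.exp_add _ _).symm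
          _ = Real.exp (((n : ℝ) + 1) * K) := by ring_nf
      calc (1 + K) * (a 0 * Real.exp ((n : ℝ) * K))
          = a 0 * ((1 + K) * Real.exp ((n : ℝ) * K)) := by ring
        _ ≤ a 0 * Real.exp (((n : ℝ) + 1) * K) :=
            mul_le_mul_of_nonneg_left h1 (ha 0)
    have hB : (1 + K) * ∑ p ∈ Icc 1 n, (b p / (α - Δt)) * Real.exp (((n : ℝ) - p) * K)
        ≤ ∑ p ∈ Icc 1 n, (b p / (α - Δt)) * Real.exp (((n : ℝ) + 1 - p) * K) := by
      rw [Finset.mul_sum]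
      apply Finset.sum_le_sum
      intro p hp
      have hp1 : 1 ≤ p := (Finset.mem_Icc.mp hp).1
      have hbp : 0 ≤ b p / (α - Δt) := div_nonneg (hb p hp1) hd.le
      have h1 : (1 + K) * Real.exp (((n : ℝ) - p) * K)
          ≤ Real.exp (((n : ℝ) + 1 - p) * K) := by
        calc (1 + K) * Real.exp (((n : ℝ) - p) * K)
            ≤ Real.exp K * Real.exp (((n : ℝ) - p) * K) :=
              mul_le_mul_of_nonneg_right hexp (Real.exp_pos _).le
          _ = Real.exp (K + ((n : ℝ) - p) * K) := (Real.exp_add _ _).symm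
          _ = Real.exp (((n : ℝ) + 1 - p) * K) := by ring_nf
      calc (1 + K) * ((b p / (α - Δt)) * Real.exp (((n : ℝ) - p) * K))
          = (b p / (α - Δt)) * ((1 + K) * Real.exp (((n : ℝ) - p) * K)) := by ring
        _ ≤ (b p / (α - Δt)) * Real.exp (((n : ℝ) + 1 - p) * K) :=
            mul_le_mul_of_nonneg_left h1 hbp
    have htop : ((n : ℝ) + 1 - ((n : ℕ) + 1 : ℕ)) * K = 0 := by push_cast; ring
    have hmul : (1 + K) * (∑ p ∈ range (n + 1), a p)
        ≤ (1 + K) * (a 0 * Real.exp ((n : ℝ) * K) +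
          ∑ p ∈ Icc 1 n, (b p / (α - Δt)) * Real.exp (((n : ℝ) - p) * K)) :=
      mul_le_mul_of_nonneg_left ih (by linarith)
    have hexp0 : Real.exp (((n : ℝ) + 1 - ((n : ℝ) + 1)) * K) = 1 := by
      norm_num
    rw [hexp0] at *
    nlinarith [hA, hB, hmul, ha1]
end GronwallPaper
end

section
/- For the P3 Hermite finite element space V_h on a uniform mesh of [0,L] with J elements of size Δx and clamped condition at 0, there is the spectral bound κ(h) = sup_{u_h ∈ V_h\{0}} a(u_h,u_h)/|u_h|² ≤ (24·420·19²/37)·k²/Δx⁴, where a(u,v) = k²∫u''v'' and |·| is the L² norm. -/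
open Finset

/-- Per-element inequality: the element stiffness contribution is bounded by the
constant times the element mass contribution (including the telescoping term). -/
lemma hermite_elem (Δx a b p q : ℝ) (hΔ : 0 ≤ Δx) :
    3 * ((2 * (b - a) - Δx * (q + p)) ^ 2 * Δx) + Δx ^ 2 * ((q - p) ^ 2 * Δx) ≤
      (24 * 420 * 19 ^ 2 / 37) *
        ((13 / 35) * ((b ^ 2 + a ^ 2) * Δx)
          + (9 / 35) * (b * a * Δx)
          + (13 * Δx / 210) * ((b * p - a * q) * Δx)
          + (Δx ^ 2 / 105) * ((q ^ 2 + p ^ 2) * Δx)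
          - (Δx ^ 2 / 70) * (q * p * Δx)
          - (11 * Δx ^ 2 / 105) * (b * q - a * p)) := by
  nlinarith [mul_nonneg hΔ (sq_nonneg (a + 9/26*b + 11/78*(Δx*p) - 1/12*(Δx*q))),
    mul_nonneg hΔ (sq_nonneg (b + 2/51*(Δx*p) - 13/102*(Δx*q))),
    mul_nonneg hΔ (sq_nonneg ((Δx*p) - 7/10*(Δx*q))),
    mul_nonneg hΔ (sq_nonneg (Δx*q)),
    mul_nonneg hΔ (sq_nonneg (a + 13/37*b + 31/222*(Δx*p) - 19/222*(Δx*q))),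
    mul_nonneg hΔ (sq_nonneg (b + 1/24*(Δx*p) - 1/8*(Δx*q))),
    mul_nonneg hΔ (sq_nonneg ((Δx*p) - (Δx*q)))]

/-- Spectral bound `κ(h) ≤ (24·420·19²/37)·k²/Δx⁴` for the clamped P3 Hermite finite element
space. A function `u_h ∈ V_h` is determined by its nodal values `u_j = u_h(x_j)` and nodal
derivatives `u'_j = u_h'(x_j)` with `u_0 = u'_0 = 0`; in these coordinates the `L²` mass form
`(u_h,u_h)` and the stiffness form `a(u_h,u_h) = k²∫₀ᴸ (u_h'')²` have the explicit expressions
below, and the claim `a(u_h,u_h) ≤ κ(h)|u_h|²` reads as stated. -/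
theorem hermite_P3_inverse_estimate
    (J : ℕ) (hJ : 1 ≤ J) (L k Δx : ℝ) (hL : 0 < L) (hk : 0 < k)
    (hΔx : Δx = L / J)
    (u u' : ℕ → ℝ) (hu0 : u 0 = 0) (hu'0 : u' 0 = 0)
    (mass stiff : ℝ)
    -- `|u_h|² = ∫₀ᴸ u_h²` expressed in nodal coordinates
    (hmass : mass =
      (13 / 35) * ∑ j ∈ Icc 1 J, (u j ^ 2 + u (j - 1) ^ 2) * Δx
      + (9 / 35) * ∑ j ∈ Icc 1 J, u j * u (j - 1) * Δx
      + (13 * Δx / 210) * ∑ j ∈ Icc 1 J, (u j * u' (j - 1) - u (j - 1) * u' j) * Δx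
      + (Δx ^ 2 / 105) * ∑ j ∈ Icc 1 J, (u' j ^ 2 + u' (j - 1) ^ 2) * Δx
      - (Δx ^ 2 / 70) * ∑ j ∈ Icc 1 J, u' j * u' (j - 1) * Δx
      - (11 * Δx ^ 2 / 105) * u J * u' J)
    -- `a(u_h,u_h) = k²∫₀ᴸ (u_h'')²` expressed in nodal coordinates
    (hstiff : stiff = k ^ 2 / Δx ^ 4 *
      (3 * ∑ j ∈ Icc 1 J, (2 * (u j - u (j - 1)) - Δx * (u' j + u' (j - 1))) ^ 2 * Δx
       + Δx ^ 2 * ∑ j ∈ Icc 1 J, (u' j - u' (j - 1)) ^ 2 * Δx)) :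
    stiff ≤ (24 * 420 * 19 ^ 2 / 37) * (k ^ 2 / Δx ^ 4) * mass := by
  have hJpos : (0 : ℝ) < J := by exact_mod_cast hJ
  have hΔpos : 0 < Δx := by rw [hΔx]; exact div_pos hL hJpos
  have key : ∀ N : ℕ,
      3 * ∑ j ∈ Icc 1 N, (2 * (u j - u (j - 1)) - Δx * (u' j + u' (j - 1))) ^ 2 * Δx
        + Δx ^ 2 * ∑ j ∈ Icc 1 N, (u' j - u' (j - 1)) ^ 2 * Δx ≤
      (24 * 420 * 19 ^ 2 / 37) *
        ((13 / 35) * ∑ j ∈ Icc 1 N, (u j ^ 2 + u (j - 1) ^ 2) * Δx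
        + (9 / 35) * ∑ j ∈ Icc 1 N, u j * u (j - 1) * Δx
        + (13 * Δx / 210) * ∑ j ∈ Icc 1 N, (u j * u' (j - 1) - u (j - 1) * u' j) * Δx
        + (Δx ^ 2 / 105) * ∑ j ∈ Icc 1 N, (u' j ^ 2 + u' (j - 1) ^ 2) * Δx
        - (Δx ^ 2 / 70) * ∑ j ∈ Icc 1 N, u' j * u' (j - 1) * Δx
        - (11 * Δx ^ 2 / 105) * u N * u' N) := by
    intro N
    induction N with
    | zero => simp [hu0, hu'0]
    | succ N ih =>
        have h1 : (1 : ℕ) ≤ N + 1 := Nat.succ_le_succ (Nat.zero_le N)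
        rw [Finset.sum_Icc_succ_top h1, Finset.sum_Icc_succ_top h1,
          Finset.sum_Icc_succ_top h1, Finset.sum_Icc_succ_top h1,
          Finset.sum_Icc_succ_top h1, Finset.sum_Icc_succ_top h1,
          Finset.sum_Icc_succ_top h1]
        have hs : N + 1 - 1 = N := rfl
        rw [hs]
        have helem := hermite_elem Δx (u N) (u (N + 1)) (u' N) (u' (N + 1)) hΔpos.le
        nlinarith [helem, ih]
  have hpos : (0 : ℝ) < k ^ 2 / Δx ^ 4 := by positivity
  calc stiff = k ^ 2 / Δx ^ 4 *
        (3 * ∑ j ∈ Icc 1 J, (2 * (u j - u (j - 1)) - Δx * (u' j + u' (j - 1))) ^ 2 * Δx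
         + Δx ^ 2 * ∑ j ∈ Icc 1 J, (u' j - u' (j - 1)) ^ 2 * Δx) := hstiff
    _ ≤ k ^ 2 / Δx ^ 4 * ((24 * 420 * 19 ^ 2 / 37) * mass) := by
        rw [hmass]; exact mul_le_mul_of_nonneg_left (key J) hpos.le
    _ = (24 * 420 * 19 ^ 2 / 37) * (k ^ 2 / Δx ^ 4) * mass := by ring
end
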